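/- arXiv:2311.10974 — 2 statements merged into one kernel-verified Lean document; each statement's English description precedes it below -/
import Mathlib

section
/- Let L_{SD} = (η/2N)Σ_i ∂²/∂E_i² + (η/2N)Σ_{l≠i}(E_i−E_l)^{-1}∂/∂E_i − 2Σ_k E_k ∂/∂E_k − N(N+1)/2. Then e^{−(N/η)ΣE_i²} Δ(E)^{1/2} ∘ L_{SD} ∘ Δ(E)^{−1/2} e^{(N/η)ΣE_i²} = −H_CM, where H_CM = −(η/2N)(Σ_i ∂²/∂E_i² + (1/4)Σ_{i≠j}(E_i−E_j)^{-2}) + (2N/η)Σ_i E_i² is the Calogero-Moser Hamiltonian. -/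
/-- Partial derivative in the `i`-th coordinate direction. -/
noncomputable def pd {N : ℕ} (i : Fin N) (f : (Fin N → ℝ) → ℝ) (E : Fin N → ℝ) : ℝ :=
  fderiv ℝ f E (Pi.single i 1)

/-- The Vandermonde determinant `Δ(E) = ∏_{k<l} (E l - E k)`. -/
def vand {N : ℕ} (E : Fin N → ℝ) : ℝ :=
  ∏ k : Fin N, ∏ l : Fin N, if k < l then E l - E k else 1

/-- The Schwinger–Dyson operator
`L_SD = (η/2N)∑_i ∂_i² + (η/2N)∑_{l≠i}(E_i-E_l)⁻¹ ∂_i - 2∑_k E_k ∂_k - N(N+1)/2`. -/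
noncomputable def LSD {N : ℕ} (η : ℝ) (f : (Fin N → ℝ) → ℝ) (E : Fin N → ℝ) : ℝ :=
  η / (2 * N) * ∑ i, pd i (pd i f) E
    + η / (2 * N) * ∑ i, ∑ l ∈ Finset.univ.erase i, (E i - E l)⁻¹ * pd i f E
    - 2 * ∑ k, E k * pd k f E
    - (N : ℝ) * ((N : ℝ) + 1) / 2 * f E

/-- The conjugating weight `W(E) = e^{-(N/η)∑ E_i²} Δ(E)^{1/2}`. -/
noncomputable def weight {N : ℕ} (η : ℝ) (E : Fin N → ℝ) : ℝ :=
  Real.exp (-((N : ℝ) / η) * ∑ i, (E i) ^ 2) * Real.sqrt (vand E)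

open Finset

lemma isOpen_strictMono {N : ℕ} : IsOpen {E : Fin N → ℝ | StrictMono E} := by
  have h : {E : Fin N → ℝ | StrictMono E}
      = ⋂ (k : Fin N), ⋂ (l : Fin N), {E : Fin N → ℝ | k < l → E k < E l} := by
    ext E
    simp [StrictMono, Set.mem_iInter]
  rw [h]
  refine isOpen_iInter_of_finite fun k => isOpen_iInter_of_finite fun l => ?_
  by_cases hkl : k < l
  · have : {E : Fin N → ℝ | k < l → E k < E l} = {E : Fin N → ℝ | E k < E l} := by
      ext E; simp [hkl]
    rw [this]
    exact isOpen_lt (continuous_apply k) (continuous_apply l)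
  · have : {E : Fin N → ℝ | k < l → E k < E l} = Set.univ := by
      ext E; simp [hkl]
    rw [this]; exact isOpen_univ

lemma vand_pos {N : ℕ} {E : Fin N → ℝ} (hE : StrictMono E) : 0 < vand E := by
  unfold vand
  refine Finset.prod_pos fun k _ => Finset.prod_pos fun l _ => ?_
  by_cases h : k < l
  · simpa [h] using sub_pos.2 (hE h)
  · simp [h]

noncomputable def psiF (N : ℕ) (η : ℝ) (y : Fin N → ℝ) : ℝ :=
  -((N : ℝ) / η) * ∑ i, y i ^ 2
    + (1 / 2) * ∑ k : Fin N, ∑ l : Fin N, if k < l then Real.log (y l - y k) else 0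

lemma weight_eq_exp {N : ℕ} (η : ℝ) {y : Fin N → ℝ} (hy : StrictMono y) :
    weight η y = Real.exp (psiF N η y) := by
  have hpos : ∀ k l : Fin N, (if k < l then y l - y k else 1) ≠ 0 := by
    intro k l
    by_cases h : k < l
    · simpa [h] using (sub_pos.2 (hy h)).ne'
    · simp [h]
  have hlog : Real.log (vand y)
      = ∑ k : Fin N, ∑ l : Fin N, if k < l then Real.log (y l - y k) else 0 := by
    unfold vand
    rw [Real.log_prod (fun k _ => Finset.prod_ne_zero_iff.2 fun l _ => hpos k l)]
    refine Finset.sum_congr rfl fun k _ => ?_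
    rw [Real.log_prod (fun l _ => hpos k l)]
    refine Finset.sum_congr rfl fun l _ => ?_
    by_cases h : k < l <;> simp [h]
  have hv := vand_pos hy
  unfold weight psiF
  rw [Real.sqrt_eq_rpow, Real.rpow_def_of_pos hv, hlog, ← Real.exp_add]
  ring_nf

open Finset

noncomputable def sF {N : ℕ} (i : Fin N) (y : Fin N → ℝ) : ℝ :=
  ∑ l ∈ Finset.univ.erase i, (y i - y l)⁻¹

noncomputable def GF (N : ℕ) (η : ℝ) (i : Fin N) (y : Fin N → ℝ) : ℝ :=
  -(2 * N / η) * y i + (1 / 2) * sF i y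

lemma sum_pairs {N : ℕ} (y : Fin N → ℝ) (i : Fin N) :
    (∑ k : Fin N, ∑ l : Fin N, if k < l then
        (y l - y k)⁻¹ * ((if l = i then (1:ℝ) else 0) - (if k = i then (1:ℝ) else 0)) else 0)
      = sF i y := by
  set T : Fin N → Fin N → ℝ := fun k l => if k < l then
      (y l - y k)⁻¹ * ((if l = i then (1:ℝ) else 0) - (if k = i then (1:ℝ) else 0)) else 0 with hT
  have h0 : ∀ k l, k ≠ i → l ≠ i → T k l = 0 := by
    intro k l hk hl
    simp only [hT, hk, hl, if_false, sub_zero, mul_zero, sub_self, ite_self]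
  have step1 : (∑ k : Fin N, ∑ l : Fin N, T k l)
      = (∑ k : Fin N, T k i) + ∑ l ∈ Finset.univ.erase i, T i l := by
    have : ∀ k : Fin N, (∑ l : Fin N, T k l) = T k i + ∑ l ∈ Finset.univ.erase i, T k l :=
      fun k => (Finset.add_sum_erase _ _ (Finset.mem_univ i)).symm
    rw [Finset.sum_congr rfl fun k _ => this k, Finset.sum_add_distrib]
    congr 1
    rw [Finset.sum_comm]
    refine Finset.sum_congr rfl fun l hl => ?_
    rw [← Finset.add_sum_erase _ _ (Finset.mem_univ i)]
    have : (∑ k ∈ Finset.univ.erase i, T k l) = 0 :=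
      Finset.sum_eq_zero fun k hk => h0 k l (Finset.ne_of_mem_erase hk) (Finset.ne_of_mem_erase hl)
    rw [this, add_zero]
  have hki : ∀ k : Fin N, T k i = if k < i then (y i - y k)⁻¹ else 0 := by
    intro k
    by_cases h : k < i
    · simp [hT, h, ne_of_lt h]
    · simp [hT, h]
  have hil : ∀ l ∈ Finset.univ.erase i, T i l = if i < l then (y i - y l)⁻¹ else 0 := by
    intro l hl
    have hli : l ≠ i := Finset.ne_of_mem_erase hl
    by_cases h : i < l
    · have h2 : (y l - y i)⁻¹ * ((0:ℝ) - 1) = (y i - y l)⁻¹ := by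
        rw [show y i - y l = -(y l - y i) by ring, inv_neg]; ring
      simp only [hT, h, if_true, hli, if_false]
      simpa using h2
    · simp [hT, h]
  rw [step1, Finset.sum_congr rfl fun k _ => hki k, Finset.sum_congr rfl hil]
  have expand : sF i y = (∑ l ∈ Finset.univ.erase i, if i < l then (y i - y l)⁻¹ else 0)
      + ∑ l ∈ Finset.univ.erase i, if l < i then (y i - y l)⁻¹ else 0 := by
    rw [← Finset.sum_add_distrib]
    refine Finset.sum_congr rfl fun l hl => ?_
    rcases lt_or_gt_of_ne (Finset.ne_of_mem_erase hl) with h | h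
    · simp [h, not_lt_of_gt h]
    · simp [h, not_lt_of_gt h]
  rw [expand, add_comm]
  congr 1
  exact .symm <| Finset.sum_erase (f := fun l => if l < i then (y i - y l)⁻¹ else 0) (a := i)
    Finset.univ (by simp)

example : True := trivial

open Finset

lemma hasFDerivAt_eval {N : ℕ} (j : Fin N) (y : Fin N → ℝ) :
    HasFDerivAt (fun y : Fin N → ℝ => y j)
      (ContinuousLinearMap.proj j : (Fin N → ℝ) →L[ℝ] ℝ) y :=
  (ContinuousLinearMap.proj j : (Fin N → ℝ) →L[ℝ] ℝ).hasFDerivAt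

lemma hasFDerivAt_eval_sub {N : ℕ} (j k : Fin N) (y : Fin N → ℝ) :
    HasFDerivAt (fun y : Fin N → ℝ => y j - y k)
      ((ContinuousLinearMap.proj j : (Fin N → ℝ) →L[ℝ] ℝ) - ContinuousLinearMap.proj k) y :=
  (hasFDerivAt_eval j y).sub (hasFDerivAt_eval k y)

lemma hasFDerivAt_psiF {N : ℕ} (η : ℝ) {y : Fin N → ℝ} (hy : StrictMono y) :
    ∃ D : (Fin N → ℝ) →L[ℝ] ℝ, HasFDerivAt (psiF N η) D y ∧
      ∀ i, D (Pi.single i 1) = GF N η i y := by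
  set D1 : (Fin N → ℝ) →L[ℝ] ℝ := ∑ i, (2 * y i) • ContinuousLinearMap.proj i with hD1
  set D2 : (Fin N → ℝ) →L[ℝ] ℝ := ∑ k, ∑ l, if k < l then
      (y l - y k)⁻¹ • ((ContinuousLinearMap.proj l : (Fin N → ℝ) →L[ℝ] ℝ) - ContinuousLinearMap.proj k) else 0 with hD2
  refine ⟨(-((N : ℝ) / η)) • D1 + (1 / 2 : ℝ) • D2, ?_, ?_⟩
  · have h1 : HasFDerivAt (fun y : Fin N → ℝ => ∑ i, y i ^ 2) D1 y := by
      apply HasFDerivAt.fun_sum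
      intro i _
      have hp := hasFDerivAt_eval i y
      simpa [pow_one, Function.comp_def] using (hasDerivAt_pow 2 (y i)).comp_hasFDerivAt y hp
    have h2 : HasFDerivAt
        (fun y : Fin N → ℝ => ∑ k : Fin N, ∑ l : Fin N, if k < l then Real.log (y l - y k) else 0)
        D2 y := by
      apply HasFDerivAt.fun_sum
      intro k _
      apply HasFDerivAt.fun_sum
      intro l _
      by_cases hkl : k < l
      · simp only [if_pos hkl]
        have hs := hasFDerivAt_eval_sub l k y
        exact (Real.hasDerivAt_log (sub_pos.2 (hy hkl)).ne').comp_hasFDerivAt y hs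
      · simp only [if_neg hkl]
        exact hasFDerivAt_const 0 y
    have := (h1.const_mul (-((N : ℝ) / η))).add (h2.const_mul (1 / 2 : ℝ))
    exact this
  · intro i
    have e1 : D1 (Pi.single i 1) = 2 * y i := by
      simp [hD1, ContinuousLinearMap.sum_apply, Pi.single_apply, mul_ite, mul_one, mul_zero]
    have e2 : D2 (Pi.single i 1) = sF i y := by
      rw [← sum_pairs y i]
      simp [hD2, ContinuousLinearMap.sum_apply,
        apply_ite (fun L : (Fin N → ℝ) →L[ℝ] ℝ => L (Pi.single i 1)),
        ContinuousLinearMap.sub_apply, ContinuousLinearMap.proj_apply,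
        Pi.single_apply, smul_eq_mul]
    simp only [ContinuousLinearMap.add_apply, ContinuousLinearMap.smul_apply, e1, e2,
      smul_eq_mul, GF]
    ring

lemma hasFDerivAt_GF {N : ℕ} (η : ℝ) (i : Fin N) {y : Fin N → ℝ} (hy : StrictMono y) :
    ∃ D : (Fin N → ℝ) →L[ℝ] ℝ, HasFDerivAt (GF N η i) D y ∧
      D (Pi.single i 1) = -(2 * N / η) - (1 / 2) * ∑ l ∈ Finset.univ.erase i, ((y i - y l) ^ 2)⁻¹ := by
  set D : (Fin N → ℝ) →L[ℝ] ℝ := (-(2 * N / η)) • ContinuousLinearMap.proj i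
    + (1 / 2 : ℝ) • ∑ l ∈ Finset.univ.erase i,
        (-(((y i - y l) ^ 2)⁻¹)) • ((ContinuousLinearMap.proj i : (Fin N → ℝ) →L[ℝ] ℝ) - ContinuousLinearMap.proj l) with hD
  have hne : ∀ l ∈ Finset.univ.erase i, y i - y l ≠ 0 := fun l hl =>
    sub_ne_zero_of_ne (hy.injective.ne (Ne.symm (Finset.ne_of_mem_erase hl)))
  refine ⟨D, ?_, ?_⟩
  · have h1 := hasFDerivAt_eval i y
    have h2 : HasFDerivAt (sF i) (∑ l ∈ Finset.univ.erase i,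
        (-(((y i - y l) ^ 2)⁻¹)) • ((ContinuousLinearMap.proj i : (Fin N → ℝ) →L[ℝ] ℝ) - ContinuousLinearMap.proj l)) y := by
      apply HasFDerivAt.fun_sum
      intro l hl
      have hs := hasFDerivAt_eval_sub i l y
      exact (hasDerivAt_inv (hne l hl)).comp_hasFDerivAt y hs
    have := (h1.const_mul (-(2 * (N : ℝ) / η))).add (h2.const_mul (1 / 2 : ℝ))
    exact this
  · have e1 : ((∑ l ∈ Finset.univ.erase i,
        (-(((y i - y l) ^ 2)⁻¹)) • ((ContinuousLinearMap.proj i : (Fin N → ℝ) →L[ℝ] ℝ) - ContinuousLinearMap.proj l) :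
          (Fin N → ℝ) →L[ℝ] ℝ))
          (Pi.single i 1) = ∑ l ∈ Finset.univ.erase i, -(((y i - y l) ^ 2)⁻¹) := by
      rw [ContinuousLinearMap.sum_apply]
      refine Finset.sum_congr rfl fun l hl => ?_
      simp [Pi.single_apply, Finset.ne_of_mem_erase hl]
    simp only [hD, ContinuousLinearMap.add_apply, ContinuousLinearMap.smul_apply, e1,
      smul_eq_mul, ContinuousLinearMap.proj_apply, Pi.single_eq_same]
    rw [Finset.sum_neg_distrib]
    ring

example : True := trivial

open Finset

lemma diff_f {N : ℕ} (f : (Fin N → ℝ) → ℝ)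
    (hf : ContDiffOn ℝ (⊤ : ℕ∞) f {E : Fin N → ℝ | StrictMono E})
    {y : Fin N → ℝ} (hy : StrictMono y) : DifferentiableAt ℝ f y := by
  have hU : {E : Fin N → ℝ | StrictMono E} ∈ nhds y := isOpen_strictMono.mem_nhds hy
  exact (hf.contDiffAt hU).differentiableAt (by simp)

lemma diff_pdf {N : ℕ} (f : (Fin N → ℝ) → ℝ)
    (hf : ContDiffOn ℝ (⊤ : ℕ∞) f {E : Fin N → ℝ | StrictMono E})
    {y : Fin N → ℝ} (hy : StrictMono y) (i : Fin N) : DifferentiableAt ℝ (pd i f) y := by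
  have hU : {E : Fin N → ℝ | StrictMono E} ∈ nhds y := isOpen_strictMono.mem_nhds hy
  have h1 : ContDiffAt ℝ 1 (fderiv ℝ f) y := (hf.contDiffAt hU).fderiv_right (WithTop.coe_le_coe.2 le_top)
  have hd : DifferentiableAt ℝ (fderiv ℝ f) y := h1.differentiableAt one_ne_zero
  exact (ContinuousLinearMap.apply ℝ ℝ (Pi.single i 1)).differentiableAt.comp y hd

lemma pd_h_eq {N : ℕ} (η : ℝ) (f : (Fin N → ℝ) → ℝ)
    (hf : ContDiffOn ℝ (⊤ : ℕ∞) f {E : Fin N → ℝ | StrictMono E})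
    {y : Fin N → ℝ} (hy : StrictMono y) (i : Fin N) :
    pd i (fun z => (weight η z)⁻¹ * f z) y
      = Real.exp (-psiF N η y) * (pd i f y - GF N η i y * f y) := by
  have hU : {E : Fin N → ℝ | StrictMono E} ∈ nhds y := isOpen_strictMono.mem_nhds hy
  have hfe : (fun z => (weight η z)⁻¹ * f z) =ᶠ[nhds y]
      fun z => Real.exp (-(psiF N η z)) * f z := by
    filter_upwards [hU] with z hz
    rw [weight_eq_exp η hz, ← Real.exp_neg]
  obtain ⟨D, hD, hDi⟩ := hasFDerivAt_psiF η hy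
  have hfd : DifferentiableAt ℝ f y := diff_f f hf hy
  have hexp : HasFDerivAt (fun z => Real.exp (-(psiF N η z)))
      (Real.exp (-(psiF N η y)) • (-D)) y := hD.neg.exp
  have hprod := hexp.mul hfd.hasFDerivAt
  show fderiv ℝ (fun z => (weight η z)⁻¹ * f z) y (Pi.single i 1) = _
  rw [hfe.fderiv_eq, show (fun z => Real.exp (-psiF N η z) * f z)
    = (fun z => Real.exp (-psiF N η z)) * f from rfl, hprod.fderiv]
  simp only [ContinuousLinearMap.add_apply, ContinuousLinearMap.smul_apply,
    ContinuousLinearMap.neg_apply, smul_eq_mul, hDi, pd]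
  ring

lemma pd_pd_h_eq {N : ℕ} (η : ℝ) (f : (Fin N → ℝ) → ℝ)
    (hf : ContDiffOn ℝ (⊤ : ℕ∞) f {E : Fin N → ℝ | StrictMono E})
    {E : Fin N → ℝ} (hE : StrictMono E) (i : Fin N) :
    pd i (pd i (fun z => (weight η z)⁻¹ * f z)) E
      = Real.exp (-psiF N η E) * (pd i (pd i f) E - 2 * GF N η i E * pd i f E
          + ((GF N η i E) ^ 2
              - (-(2 * N / η) - (1 / 2) * ∑ l ∈ Finset.univ.erase i, ((E i - E l) ^ 2)⁻¹)) * f E) := by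
  have hU : {E : Fin N → ℝ | StrictMono E} ∈ nhds E := isOpen_strictMono.mem_nhds hE
  have hfe : pd i (fun z => (weight η z)⁻¹ * f z) =ᶠ[nhds E]
      fun z => Real.exp (-(psiF N η z)) * (pd i f z - GF N η i z * f z) := by
    filter_upwards [hU] with z hz
    exact pd_h_eq η f hf hz i
  obtain ⟨D, hD, hDi⟩ := hasFDerivAt_psiF η hE
  obtain ⟨DG, hDG, hDGi⟩ := hasFDerivAt_GF η i hE
  have hfd : DifferentiableAt ℝ f E := diff_f f hf hE
  have hfd1 : DifferentiableAt ℝ (pd i f) E := diff_pdf f hf hE i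
  have hexp : HasFDerivAt (fun z => Real.exp (-(psiF N η z)))
      (Real.exp (-(psiF N η E)) • (-D)) E := hD.neg.exp
  have hinner : HasFDerivAt (fun z => pd i f z - GF N η i z * f z)
      (fderiv ℝ (pd i f) E - (GF N η i E • fderiv ℝ f E + f E • DG)) E :=
    hfd1.hasFDerivAt.sub (hDG.mul hfd.hasFDerivAt)
  have hprod := hexp.mul hinner
  show fderiv ℝ (pd i (fun z => (weight η z)⁻¹ * f z)) E (Pi.single i 1) = _
  rw [hfe.fderiv_eq, show (fun z => Real.exp (-psiF N η z) * (pd i f z - GF N η i z * f z))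
    = (fun z => Real.exp (-psiF N η z)) * (fun z => pd i f z - GF N η i z * f z) from rfl,
    hprod.fderiv]
  simp only [ContinuousLinearMap.add_apply, ContinuousLinearMap.smul_apply,
    ContinuousLinearMap.neg_apply, ContinuousLinearMap.sub_apply, smul_eq_mul, hDi, hDGi, pd]
  ring

example : True := trivial

open Finset

lemma sum_Es {N : ℕ} (hN : 2 ≤ N) {E : Fin N → ℝ} (hE : StrictMono E) :
    ∑ i, ∑ l ∈ Finset.univ.erase i, E i * (E i - E l)⁻¹ = N * (N - 1) / 2 := by
  set S := ∑ i, ∑ l ∈ Finset.univ.erase i, E i * (E i - E l)⁻¹ with hS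
  have swap : (∑ i, ∑ l ∈ Finset.univ.erase i, E l * (E l - E i)⁻¹) = S := by
    refine Finset.sum_comm' fun x y => ?_
    simp [Finset.mem_erase, ne_comm, and_comm]
  have key : S + S = N * (N - 1) := by
    nth_rewrite 2 [← swap]
    rw [← Finset.sum_add_distrib]
    have : ∀ i ∈ Finset.univ, (∑ l ∈ Finset.univ.erase i, E i * (E i - E l)⁻¹)
        + (∑ l ∈ Finset.univ.erase i, E l * (E l - E i)⁻¹)
        = ∑ l ∈ Finset.univ.erase i, (1 : ℝ) := by
      intro i _
      rw [← Finset.sum_add_distrib]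
      refine Finset.sum_congr rfl fun l hl => ?_
      have h : i ≠ l := (Finset.ne_of_mem_erase hl).symm
      have hne : E i - E l ≠ 0 := sub_ne_zero_of_ne (hE.injective.ne h)
      have hne' : E l - E i ≠ 0 := sub_ne_zero_of_ne (hE.injective.ne h.symm)
      field_simp
      ring
    rw [Finset.sum_congr rfl this]
    have h5 : ∀ i ∈ (Finset.univ : Finset (Fin N)), (∑ _l ∈ Finset.univ.erase i, (1:ℝ)) = (N : ℝ) - 1 := by
      intro i _
      rw [Finset.sum_const, Finset.card_erase_of_mem (Finset.mem_univ i), Finset.card_univ,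
        Fintype.card_fin, nsmul_eq_mul, mul_one, Nat.cast_sub (by omega : 1 ≤ N), Nat.cast_one]
    rw [Finset.sum_congr rfl h5, Finset.sum_const, Finset.card_univ, Fintype.card_fin,
      nsmul_eq_mul]
  linarith

lemma sum_sq {N : ℕ} {E : Fin N → ℝ} (hE : StrictMono E) :
    ∑ i, (∑ l ∈ Finset.univ.erase i, (E i - E l)⁻¹) ^ 2
      = ∑ i, ∑ l ∈ Finset.univ.erase i, ((E i - E l) ^ 2)⁻¹ := by
  have hne : ∀ {a b : Fin N}, a ≠ b → E a - E b ≠ 0 := fun h =>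
    sub_ne_zero_of_ne (hE.injective.ne h)
  set c : Fin N → Fin N → Fin N → ℝ := fun i l m =>
    if i ≠ l ∧ i ≠ m ∧ l ≠ m then ((E i - E l) * (E i - E m))⁻¹ else 0 with hc
  have hzero1 : ∀ i m, c i i m = 0 := by intro i m; simp [hc]
  have hzero2 : ∀ i l, c i l i = 0 := by intro i l; simp [hc]
  have hzero3 : ∀ i l, c i l l = 0 := by intro i l; simp [hc]
  -- cyclic identity pointwise
  have hcyc : ∀ i l m, c i l m + c l m i + c m i l = 0 := by
    intro i l m
    by_cases h : i ≠ l ∧ i ≠ m ∧ l ≠ m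
    · obtain ⟨h1, h2, h3⟩ := h
      have c1 : c i l m = ((E i - E l) * (E i - E m))⁻¹ := by simp [hc, h1, h2, h3]
      have c2 : c l m i = ((E l - E m) * (E l - E i))⁻¹ := by simp [hc, h1.symm, h2.symm, h3]
      have c3 : c m i l = ((E m - E i) * (E m - E l))⁻¹ := by simp [hc, h1, h2.symm, h3.symm]
      rw [c1, c2, c3]
      have d1 := hne h1
      have d2 := hne h2
      have d3 := hne h3
      have d1' := hne h1.symm
      have d2' := hne h2.symm
      have d3' := hne h3.symm
      field_simp
      ring
    · have h' : ¬(l ≠ m ∧ l ≠ i ∧ m ≠ i) := by tauto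
      have h'' : ¬(m ≠ i ∧ m ≠ l ∧ i ≠ l) := by tauto
      simp [hc, h, h', h'']
  have R0 : (∑ i, ∑ l, ∑ m, c i l m) = 0 := by
    have r1 : (∑ i : Fin N, ∑ l : Fin N, ∑ m : Fin N, c l m i)
        = ∑ i : Fin N, ∑ l : Fin N, ∑ m : Fin N, c i l m := by
      rw [Finset.sum_comm]
      exact Finset.sum_congr rfl fun l _ => Finset.sum_comm
    have r2 : (∑ i : Fin N, ∑ l : Fin N, ∑ m : Fin N, c m i l)
        = ∑ i : Fin N, ∑ l : Fin N, ∑ m : Fin N, c i l m := by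
      rw [show (∑ i : Fin N, ∑ l : Fin N, ∑ m : Fin N, c m i l)
          = ∑ i : Fin N, ∑ m : Fin N, ∑ l : Fin N, c m i l from
        Finset.sum_congr rfl fun i _ => Finset.sum_comm]
      exact Finset.sum_comm
    have big : (∑ i : Fin N, ∑ l : Fin N, ∑ m : Fin N, (c i l m + c l m i + c m i l)) = 0 :=
      Finset.sum_eq_zero fun i _ => Finset.sum_eq_zero fun l _ => Finset.sum_eq_zero fun m _ =>
        hcyc i l m
    simp only [Finset.sum_add_distrib] at big
    rw [r1, r2] at big
    linarith
  -- rewrite s_i^2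
  have expand : ∀ i : Fin N, (∑ l ∈ Finset.univ.erase i, (E i - E l)⁻¹) ^ 2
      = (∑ l ∈ Finset.univ.erase i, ((E i - E l) ^ 2)⁻¹) + ∑ l, ∑ m, c i l m := by
    intro i
    have h1 : (∑ l, ∑ m, c i l m) = ∑ l ∈ Finset.univ.erase i, ∑ m, c i l m :=
      (Finset.sum_erase _ (by simp [hzero1])).symm
    have h2 : ∀ l ∈ Finset.univ.erase i, (∑ m, c i l m)
        = ∑ m ∈ (Finset.univ.erase i).erase l, c i l m := by
      intro l hl
      rw [Finset.sum_erase _ (hzero3 i l), Finset.sum_erase _ (hzero2 i l)]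
    rw [h1, Finset.sum_congr rfl h2, sq, Finset.sum_mul_sum]
    rw [← Finset.sum_add_distrib]
    refine Finset.sum_congr rfl fun l hl => ?_
    have hli : l ≠ i := Finset.ne_of_mem_erase hl
    have h3 : ∀ m ∈ Finset.univ.erase i, (E i - E l)⁻¹ * (E i - E m)⁻¹ = c i l m
        ∨ True := fun _ _ => Or.inr trivial
    have h4 : (∑ m ∈ Finset.univ.erase i, (E i - E l)⁻¹ * (E i - E m)⁻¹)
        = ((E i - E l) ^ 2)⁻¹ + ∑ m ∈ (Finset.univ.erase i).erase l, (E i - E l)⁻¹ * (E i - E m)⁻¹ := by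
      rw [← Finset.add_sum_erase _ _ hl]
      congr 1
      rw [← mul_inv, sq]
    rw [h4]
    congr 1
    refine Finset.sum_congr rfl fun m hm => ?_
    have hml : m ≠ l := Finset.ne_of_mem_erase hm
    have hmi : m ≠ i := Finset.ne_of_mem_erase (Finset.mem_of_mem_erase hm)
    rw [hc]
    simp only [hli.symm, hmi.symm, hml.symm, ne_eq, not_false_eq_true, and_self, if_true]
    rw [mul_inv]
  calc ∑ i, (∑ l ∈ Finset.univ.erase i, (E i - E l)⁻¹) ^ 2
      = ∑ i, ((∑ l ∈ Finset.univ.erase i, ((E i - E l) ^ 2)⁻¹) + ∑ l, ∑ m, c i l m) :=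
        Finset.sum_congr rfl fun i _ => expand i
    _ = (∑ i, ∑ l ∈ Finset.univ.erase i, ((E i - E l) ^ 2)⁻¹) + ∑ i, ∑ l, ∑ m, c i l m :=
        Finset.sum_add_distrib
    _ = ∑ i, ∑ l ∈ Finset.univ.erase i, ((E i - E l) ^ 2)⁻¹ := by rw [R0, add_zero]

example : True := trivial

/-- Conjugating `L_SD` by `e^{-(N/η)∑E_i²} Δ(E)^{1/2}` gives `-H_CM`, where `H_CM` is the
Calogero–Moser Hamiltonian
`-(η/2N)(∑_i ∂_i² + (1/4)∑_{i≠j}(E_i-E_j)⁻²) + (2N/η)∑_i E_i²`. -/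
theorem stmt12 (N : ℕ) (hN : 2 ≤ N) (η : ℝ) (hη : 0 < η)
    (f : (Fin N → ℝ) → ℝ)
    (hf : ContDiffOn ℝ (⊤ : ℕ∞) f {E : Fin N → ℝ | StrictMono E})
    (E : Fin N → ℝ) (hE : StrictMono E) :
    weight η E * LSD η (fun y => (weight η y)⁻¹ * f y) E
      = η / (2 * N) *
          (∑ i, pd i (pd i f) E
            + (1 / 4) * ∑ i, ∑ j ∈ Finset.univ.erase i, ((E i - E j) ^ 2)⁻¹ * f E)
        - (2 * N / η) * (∑ i, (E i) ^ 2) * f E := by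
  have hNR : (N : ℝ) ≠ 0 := Nat.cast_ne_zero.2 (by omega)
  have hηR : η ≠ 0 := ne_of_gt hη
  set Xi := Real.exp (-psiF N η E) with hXi
  have hXXi : Real.exp (psiF N η E) * Xi = 1 := by
    rw [hXi, ← Real.exp_add]; simp
  have hw : weight η E = Real.exp (psiF N η E) := weight_eq_exp η hE
  have hB : ∀ i, pd i (fun y => (weight η y)⁻¹ * f y) E
      = Xi * (pd i f E - GF N η i E * f E) := fun i => pd_h_eq η f hf hE i
  have hA : ∀ i, pd i (pd i (fun y => (weight η y)⁻¹ * f y)) E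
      = Xi * (pd i (pd i f) E - 2 * GF N η i E * pd i f E
          + ((GF N η i E) ^ 2 - (-(2 * N / η)
              - (1 / 2) * ∑ l ∈ Finset.univ.erase i, ((E i - E l) ^ 2)⁻¹)) * f E) :=
    fun i => pd_pd_h_eq η f hf hE i
  have t1 : (∑ i, pd i (pd i (fun y => (weight η y)⁻¹ * f y)) E)
      = Xi * ∑ i, (pd i (pd i f) E - 2 * GF N η i E * pd i f E
          + ((GF N η i E) ^ 2 - (-(2 * N / η)
              - (1 / 2) * ∑ l ∈ Finset.univ.erase i, ((E i - E l) ^ 2)⁻¹)) * f E) := by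
    rw [Finset.sum_congr rfl fun i _ => hA i, ← Finset.mul_sum]
  have t2 : (∑ i, ∑ l ∈ Finset.univ.erase i,
        (E i - E l)⁻¹ * pd i (fun y => (weight η y)⁻¹ * f y) E)
      = Xi * ∑ i, sF i E * (pd i f E - GF N η i E * f E) := by
    rw [Finset.mul_sum]
    refine Finset.sum_congr rfl fun i _ => ?_
    rw [← Finset.sum_mul, hB i]
    simp only [sF]
    ring
  have t3 : (∑ k, E k * pd k (fun y => (weight η y)⁻¹ * f y) E)
      = Xi * ∑ k, E k * (pd k f E - GF N η k E * f E) := by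
    rw [Finset.mul_sum]
    refine Finset.sum_congr rfl fun k _ => ?_
    rw [hB k]
    ring
  have t4 : (weight η E)⁻¹ * f E = Xi * f E := by
    rw [hw, ← Real.exp_neg]
  have collapse : ∀ a b c d : ℝ,
      Real.exp (psiF N η E) * (η / (2 * ↑N) * (Xi * a) + η / (2 * ↑N) * (Xi * b)
        - 2 * (Xi * c) - ↑N * (↑N + 1) / 2 * (Xi * d))
      = η / (2 * ↑N) * a + η / (2 * ↑N) * b - 2 * c - ↑N * (↑N + 1) / 2 * d := by
    intro a b c d
    calc Real.exp (psiF N η E) * (η / (2 * ↑N) * (Xi * a) + η / (2 * ↑N) * (Xi * b)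
          - 2 * (Xi * c) - ↑N * (↑N + 1) / 2 * (Xi * d))
        = (Real.exp (psiF N η E) * Xi) * (η / (2 * ↑N) * a + η / (2 * ↑N) * b
            - 2 * c - ↑N * (↑N + 1) / 2 * d) := by ring
      _ = _ := by rw [hXXi, one_mul]
  rw [LSD, t1, t2, t3, t4, hw, collapse]
  -- now everything is scalar algebra with sums
  rw [Finset.mul_sum, Finset.mul_sum, Finset.mul_sum, ← Finset.sum_add_distrib,
    ← Finset.sum_sub_distrib]
  have main : ∀ i ∈ (Finset.univ : Finset (Fin N)),
      (η / (2 * ↑N) * (pd i (pd i f) E - 2 * GF N η i E * pd i f E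
          + ((GF N η i E) ^ 2 - (-(2 * ↑N / η)
              - (1 / 2) * ∑ l ∈ Finset.univ.erase i, ((E i - E l) ^ 2)⁻¹)) * f E)
        + η / (2 * ↑N) * (sF i E * (pd i f E - GF N η i E * f E))
        - 2 * (E i * (pd i f E - GF N η i E * f E)))
      = η / (2 * ↑N) * pd i (pd i f) E
        + (-(2 * ↑N / η) * (E i) ^ 2 + 1
            + (η / (4 * ↑N)) * ∑ l ∈ Finset.univ.erase i, ((E i - E l) ^ 2)⁻¹
            - (η / (8 * ↑N)) * (sF i E) ^ 2 + E i * sF i E) * f E := by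
    intro i _
    have hg : GF N η i E = -(2 * ↑N / η) * E i + (1 / 2) * sF i E := rfl
    rw [hg]
    field_simp
    ring
  rw [Finset.sum_congr rfl main]
  simp only [Finset.sum_add_distrib]
  rw [← Finset.mul_sum, ← Finset.sum_mul]
  -- now deal with the coefficient sum
  have hqsum : (∑ i, (-(2 * ↑N / η) * (E i) ^ 2 + 1
      + (η / (4 * ↑N)) * ∑ l ∈ Finset.univ.erase i, ((E i - E l) ^ 2)⁻¹
      - (η / (8 * ↑N)) * (sF i E) ^ 2 + E i * sF i E))
      = -(2 * ↑N / η) * (∑ i, (E i) ^ 2) + ↑N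
        + (η / (8 * ↑N)) * (∑ i, ∑ l ∈ Finset.univ.erase i, ((E i - E l) ^ 2)⁻¹)
        + ↑N * (↑N - 1) / 2 := by
    simp only [Finset.sum_add_distrib, Finset.sum_sub_distrib, ← Finset.mul_sum]
    have e1 : (∑ _i : Fin N, (1 : ℝ)) = (N : ℝ) := by
      simp [Finset.card_univ]
    have e2 : (∑ i, (sF i E) ^ 2)
        = ∑ i, ∑ l ∈ Finset.univ.erase i, ((E i - E l) ^ 2)⁻¹ := sum_sq hE
    have e3 : (∑ i, E i * sF i E) = ↑N * (↑N - 1) / 2 := by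
      simp only [sF, Finset.mul_sum]
      exact sum_Es hN hE
    rw [e1, e2, e3]
    ring
  rw [hqsum]
  -- and the RHS inner double sum
  have hrhs : (∑ i, ∑ j ∈ Finset.univ.erase i, ((E i - E j) ^ 2)⁻¹ * f E)
      = (∑ i, ∑ j ∈ Finset.univ.erase i, ((E i - E j) ^ 2)⁻¹) * f E := by
    rw [Finset.sum_mul]
    exact Finset.sum_congr rfl fun i _ => by rw [Finset.sum_mul]
  rw [hrhs]
  field_simp
  ring
end

section
/- In the associative algebra generated by a_i, a_i^† with relations [a_i, a_j^†] = A_{ij} as above, the Hamiltonian H = (1/2)Σ_i {a_i, a_i^†} satisfies [H, a_j^†] = a_j^† and [H, a_j] = −a_j for each j. -/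
lemma stmt15_helper {A : Type*} [Ring A] (x y z : A) (h : y * z = z * y) :
    (x*y + y*x)*z - z*(x*y + y*x) = (x*z - z*x)*y + y*(x*z - z*x) := by
  have h1 : x*(y*z) = x*(z*y) := by rw [h]
  have h2 : (z*y)*x = (y*z)*x := by rw [h]
  calc (x*y + y*x)*z - z*(x*y + y*x)
      = x*(y*z) + y*(x*z) - z*(x*y) - (z*y)*x := by noncomm_ring
    _ = x*(z*y) + y*(x*z) - z*(x*y) - (y*z)*x := by rw [h1, h2]
    _ = (x*z - z*x)*y + y*(x*z - z*x) := by noncomm_ring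

/-- In the deformed oscillator algebra, the Hamiltonian `H = (1/2)∑_i {a_i, a_i†}`
satisfies `[H, a_j†] = a_j†` and `[H, a_j] = -a_j`. -/
theorem stmt15 {A : Type*} [Ring A] [Algebra ℝ A] (N : ℕ) (hN : 2 ≤ N) (β : ℝ)
    (a ad : Fin N → A) (K : Fin N → Fin N → A)
    (hKsymm : ∀ i j, K i j = K j i)
    (hKii : ∀ i, K i i = 1)
    (hK2 : ∀ i j, K i j * K i j = 1)
    (haa : ∀ i j, a i * a j = a j * a i)
    (hadad : ∀ i j, ad i * ad j = ad j * ad i)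
    (haad : ∀ i j, a i * ad j - ad j * a i
      = (if i = j then 1 + β • ∑ l, K i l else 0) - β • K i j)
    (hKa : ∀ i j, K i j * a j = a i * K i j)
    (hKad : ∀ i j, K i j * ad j = ad i * K i j)
    (hKa' : ∀ i j k, k ≠ i → k ≠ j → K i j * a k = a k * K i j)
    (hKad' : ∀ i j k, k ≠ i → k ≠ j → K i j * ad k = ad k * K i j)
    (H : A) (hH : H = (2 : ℝ)⁻¹ • ∑ i, (a i * ad i + ad i * a i)) (j : Fin N) :
    H * ad j - ad j * H = ad j ∧ H * a j - a j * H = - a j := by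
  subst hH
  -- the commutator of the full sum with ad j
  have key_ad : (∑ i, (a i * ad i + ad i * a i)) * ad j
      - ad j * (∑ i, (a i * ad i + ad i * a i)) = ad j + ad j := by
    rw [Finset.sum_mul, Finset.mul_sum, ← Finset.sum_sub_distrib]
    have e1 : ∀ i ∈ Finset.univ, (a i * ad i + ad i * a i) * ad j
        - ad j * (a i * ad i + ad i * a i)
        = (((if i = j then 1 + β • ∑ l, K i l else 0) - β • K i j) * ad i
          + ad i * ((if i = j then 1 + β • ∑ l, K i l else 0) - β • K i j)) := by
      intro i _
      rw [← haad i j]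
      exact stmt15_helper (a i) (ad i) (ad j) (hadad i j)
    rw [Finset.sum_congr rfl e1]
    have e2 : ∀ i ∈ Finset.univ, (((if i = j then 1 + β • ∑ l, K i l else 0) - β • K i j) * ad i
          + ad i * ((if i = j then 1 + β • ∑ l, K i l else 0) - β • K i j))
        = (((if i = j then 1 + β • ∑ l, K i l else 0) * ad i
            + ad i * (if i = j then 1 + β • ∑ l, K i l else 0))
          - β • (K i j * ad i + ad i * K i j)) := by
      intro i _
      simp only [sub_mul, mul_sub, smul_mul_assoc, mul_smul_comm, smul_add]
      abel
    rw [Finset.sum_congr rfl e2, Finset.sum_sub_distrib, ← Finset.smul_sum]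
    have e3 : ∑ i, ((if i = j then (1:A) + β • ∑ l, K i l else 0) * ad i
        + ad i * (if i = j then (1:A) + β • ∑ l, K i l else 0))
        = (1 + β • ∑ l, K j l) * ad j + ad j * (1 + β • ∑ l, K j l) := by
      rw [Finset.sum_eq_single j]
      · simp
      · intro i _ hij; simp [hij]
      · simp
    rw [e3]
    have e4 : (1 + β • ∑ l, K j l) * ad j + ad j * (1 + β • ∑ l, K j l)
        = ad j + ad j + β • ((∑ l, K j l) * ad j + ad j * ∑ l, K j l) := by
      simp only [add_mul, mul_add, one_mul, mul_one, smul_mul_assoc, mul_smul_comm, smul_add]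
      abel
    rw [e4]
    have claim : (∑ l, K j l) * ad j + ad j * ∑ l, K j l
        = ∑ i, (K i j * ad i + ad i * K i j) := by
      rw [Finset.sum_mul, Finset.mul_sum, ← Finset.sum_add_distrib]
      apply Finset.sum_congr rfl
      intro l _
      have h1 : K j l * ad j = ad l * K l j := by rw [hKsymm j l]; exact hKad l j
      have h2 : K l j * ad l = ad j * K l j := by
        have := hKad j l
        rwa [hKsymm j l] at this
      rw [h1, h2, hKsymm j l]
      abel
    rw [claim]
    abel
  -- the commutator of the full sum with a j
  have key_a : (∑ i, (a i * ad i + ad i * a i)) * a j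
      - a j * (∑ i, (a i * ad i + ad i * a i)) = -(a j + a j) := by
    rw [Finset.sum_mul, Finset.mul_sum, ← Finset.sum_sub_distrib]
    have e1 : ∀ i ∈ Finset.univ, (a i * ad i + ad i * a i) * a j
        - a j * (a i * ad i + ad i * a i)
        = -(((if j = i then 1 + β • ∑ l, K j l else 0) - β • K j i) * a i
          + a i * ((if j = i then 1 + β • ∑ l, K j l else 0) - β • K j i)) := by
      intro i _
      have hc : a i * ad i + ad i * a i = ad i * a i + a i * ad i := add_comm _ _
      rw [hc]
      have := stmt15_helper (ad i) (a i) (a j) (haa i j)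
      rw [this]
      have hD : ad i * a j - a j * ad i
          = -((if j = i then 1 + β • ∑ l, K j l else 0) - β • K j i) := by
        rw [← haad j i]; abel
      rw [hD]
      noncomm_ring
    rw [Finset.sum_congr rfl e1, Finset.sum_neg_distrib]
    congr 1
    have e2 : ∀ i ∈ Finset.univ, (((if j = i then 1 + β • ∑ l, K j l else 0) - β • K j i) * a i
          + a i * ((if j = i then 1 + β • ∑ l, K j l else 0) - β • K j i))
        = (((if j = i then 1 + β • ∑ l, K j l else 0) * a i
            + a i * (if j = i then 1 + β • ∑ l, K j l else 0))
          - β • (K j i * a i + a i * K j i)) := by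
      intro i _
      simp only [sub_mul, mul_sub, smul_mul_assoc, mul_smul_comm, smul_add]
      abel
    rw [Finset.sum_congr rfl e2, Finset.sum_sub_distrib, ← Finset.smul_sum]
    have e3 : ∑ i, ((if j = i then (1:A) + β • ∑ l, K j l else 0) * a i
        + a i * (if j = i then (1:A) + β • ∑ l, K j l else 0))
        = (1 + β • ∑ l, K j l) * a j + a j * (1 + β • ∑ l, K j l) := by
      rw [Finset.sum_eq_single j]
      · simp
      · intro i _ hij; simp [Ne.symm hij]
      · simp
    rw [e3]
    have e4 : (1 + β • ∑ l, K j l) * a j + a j * (1 + β • ∑ l, K j l)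
        = a j + a j + β • ((∑ l, K j l) * a j + a j * ∑ l, K j l) := by
      simp only [add_mul, mul_add, one_mul, mul_one, smul_mul_assoc, mul_smul_comm, smul_add]
      abel
    rw [e4]
    have claim : (∑ l, K j l) * a j + a j * ∑ l, K j l
        = ∑ i, (K j i * a i + a i * K j i) := by
      rw [Finset.sum_mul, Finset.mul_sum, ← Finset.sum_add_distrib]
      apply Finset.sum_congr rfl
      intro l _
      have h1 : K j l * a j = a l * K l j := by rw [hKsymm j l]; exact hKa l j
      have h2 : K j l * a l = a j * K j l := hKa j l
      rw [h1, h2, hKsymm j l]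
      abel
    rw [claim]
    abel
  constructor
  · rw [smul_mul_assoc, mul_smul_comm, ← smul_sub, key_ad, ← two_smul ℝ (ad j), smul_smul]
    norm_num
  · rw [smul_mul_assoc, mul_smul_comm, ← smul_sub, key_a, ← two_smul ℝ (a j), smul_neg, smul_smul]
    norm_num
end
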